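/- With K₁, K₂ operator-valued positive definite kernels on Λ, define (K₁ ∗ K₂)(λ, μ) := K₁(λ, μ) ⊗ K₂(λ, μ). Then the formula (πF)(λ) := F(λ, λ) defines a coisometry π from H_{K₁} ⊗ H_{K₂} onto the RKHS H_{K₁∗K₂}, with kernel ker π = N = {F : F(λ,λ) = 0 for all λ}, and π*((K₁∗K₂)(·, μ)(x₁ ⊗ x₂)) = K₁(·, μ)x₁ ⊗ K₂(·, μ)x₂. -/

import Mathlib

open ContinuousLinearMap
open scoped InnerProductSpace Kronecker

/-!
The kernel functions `(K₁∗K₂)(·,μ)x` of `H_{K₁∗K₂}` and the diagonal kernel functions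
`(K₁ ⊗ K₂)(·,(μ,μ))x` of `H_{K₁} ⊗ H_{K₂}` have the same Gram matrix `(K₁∗K₂)(λ, μ)`, so
`(K₁∗K₂)(·,μ)x ↦ (K₁ ⊗ K₂)(·,(μ,μ))x` extends from the dense span of the kernel functions to an
isometry `S`. By the reproducing property `π := S*` is evaluation on the diagonal, and since
evaluation on an RKHS is injective, `ker π` consists of the functions vanishing there.
-/

section GramExtension

variable {𝕜 E F ι : Type*} [RCLike 𝕜]
  [NormedAddCommGroup E] [InnerProductSpace 𝕜 E] [NormedAddCommGroup F] [InnerProductSpace 𝕜 F]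
  {v : ι → E} {w : ι → F}

theorem inner_linearCombination_eq_of_inner_eq (h : ∀ i j, ⟪v i, v j⟫_𝕜 = ⟪w i, w j⟫_𝕜)
    (f g : ι →₀ 𝕜) :
    ⟪Finsupp.linearCombination 𝕜 v f, Finsupp.linearCombination 𝕜 v g⟫_𝕜 =
      ⟪Finsupp.linearCombination 𝕜 w f, Finsupp.linearCombination 𝕜 w g⟫_𝕜 := by
  simp only [Finsupp.linearCombination_apply, Finsupp.sum, sum_inner, inner_sum,
    inner_smul_left, inner_smul_right, h]

theorem norm_linearCombination_eq_of_inner_eq (h : ∀ i j, ⟪v i, v j⟫_𝕜 = ⟪w i, w j⟫_𝕜)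
    (f : ι →₀ 𝕜) :
    ‖Finsupp.linearCombination 𝕜 w f‖ = ‖Finsupp.linearCombination 𝕜 v f‖ := by
  rw [norm_eq_sqrt_re_inner (𝕜 := 𝕜), norm_eq_sqrt_re_inner (𝕜 := 𝕜),
    inner_linearCombination_eq_of_inner_eq h]

theorem exists_linearIsometry_of_inner_eq [CompleteSpace F]
    (hv : (Submodule.span 𝕜 (Set.range v)).topologicalClosure = ⊤)
    (h : ∀ i j, ⟪v i, v j⟫_𝕜 = ⟪w i, w j⟫_𝕜) :
    ∃ S : E →ₗᵢ[𝕜] F, ∀ i, S (v i) = w i := by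
  set e := Finsupp.linearCombination 𝕜 v
  set f := Finsupp.linearCombination 𝕜 w
  have hdense : DenseRange e := by
    rw [DenseRange, ← LinearMap.coe_range, Finsupp.range_linearCombination]
    exact Submodule.dense_iff_topologicalClosure_eq_top.mpr hv
  have hbound : ∃ C, ∀ x, ‖f x‖ ≤ C * ‖e x‖ :=
    ⟨1, fun x => by rw [one_mul, norm_linearCombination_eq_of_inner_eq h]⟩
  have hext : ∀ x, f.extendOfNorm e (e x) = f x := LinearMap.extendOfNorm_eq hdense hbound
  have hnorm : ∀ y, ‖f.extendOfNorm e y‖ = ‖y‖ := fun y =>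
    hdense.induction_on y (isClosed_eq (by fun_prop) continuous_norm) fun x => by
      rw [hext, norm_linearCombination_eq_of_inner_eq h]
  refine ⟨⟨(f.extendOfNorm e).toLinearMap, hnorm⟩, fun i => ?_⟩
  simpa [e, f] using hext (Finsupp.single i 1)

end GramExtension

section Reproducing

variable {𝕜 X V E : Type*} [RCLike 𝕜]
  [NormedAddCommGroup V] [InnerProductSpace 𝕜 V] [NormedAddCommGroup E] [InnerProductSpace 𝕜 E]

theorem eq_zero_of_forall_eval_eq_zero_of_reproducing [CompleteSpace E]
    {ev : E →ₗ[𝕜] (X → V)} {k : X → V → E}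
    (hrep : ∀ F p x, ⟪ev F p, x⟫_𝕜 = ⟪F, k p x⟫_𝕜)
    (htot : (Submodule.span 𝕜 (Set.range (Function.uncurry k))).topologicalClosure = ⊤)
    {F : E} (hF : ∀ p, ev F p = 0) : F = 0 := by
  have hperp : 𝕜 ∙ F ⟂ Submodule.span 𝕜 (Set.range (Function.uncurry k)) :=
    Submodule.isOrtho_span.mpr <| by
      rintro _ rfl _ ⟨⟨p, x⟩, rfl⟩
      rw [Function.uncurry_apply_pair, ← hrep, hF, inner_zero_left]
  have hF_mem := hperp.le (Submodule.mem_span_singleton_self F)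
  rwa [Submodule.topologicalClosure_eq_top_iff.mp htot, Submodule.mem_bot] at hF_mem

theorem eval_adjoint_apply_of_map_kernel {Y E' : Type*} [NormedAddCommGroup E']
    [InnerProductSpace 𝕜 E'] [CompleteSpace E] [CompleteSpace E']
    {ev : E →ₗ[𝕜] (X → V)} {k : X → V → E} (hrep : ∀ F p x, ⟪ev F p, x⟫_𝕜 = ⟪F, k p x⟫_𝕜)
    {ev' : E' →ₗ[𝕜] (Y → V)} {k' : Y → V → E'}
    (hrep' : ∀ F p x, ⟪ev' F p, x⟫_𝕜 = ⟪F, k' p x⟫_𝕜)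
    {φ : Y → X} {T : E' →L[𝕜] E} (hT : ∀ y x, T (k' y x) = k (φ y) x) (F : E) (y : Y) :
    ev' (adjoint T F) y = ev F (φ y) :=
  ext_inner_right 𝕜 fun x => by rw [hrep', hrep, adjoint_inner_left, hT]

end Reproducing

theorem diagonal_restriction_coisometry_general {Λ : Type*} {n m : ℕ} {H H' : Type*}
    [NormedAddCommGroup H] [InnerProductSpace ℂ H] [CompleteSpace H]
    [NormedAddCommGroup H'] [InnerProductSpace ℂ H'] [CompleteSpace H']
    (K₁ : Λ → Λ → Matrix (Fin n) (Fin n) ℂ)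
    (K₂ : Λ → Λ → Matrix (Fin m) (Fin m) ℂ)
    -- `H` : the RKHS on `Λ × Λ` with kernel `K₁ ⊗ K₂`
    (ev : H →ₗ[ℂ] ((Λ × Λ) → EuclideanSpace ℂ (Fin n × Fin m)))
    (kfun : (Λ × Λ) → EuclideanSpace ℂ (Fin n × Fin m) → H)
    (hrep : ∀ (F : H) (p : Λ × Λ) (x : EuclideanSpace ℂ (Fin n × Fin m)),
      ⟪ev F p, x⟫_ℂ = ⟪F, kfun p x⟫_ℂ)
    (hker : ∀ (q : Λ × Λ) (x : EuclideanSpace ℂ (Fin n × Fin m)) (p : Λ × Λ),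
      ev (kfun q x) p = Matrix.toEuclideanLin ((K₁ p.1 q.1) ⊗ₖ (K₂ p.2 q.2)) x)
    -- `H'` : the RKHS on `Λ` with kernel `K₁ ∗ K₂`
    (ev' : H' →ₗ[ℂ] (Λ → EuclideanSpace ℂ (Fin n × Fin m)))
    (kfun' : Λ → EuclideanSpace ℂ (Fin n × Fin m) → H')
    (hrep' : ∀ (F : H') (a : Λ) (x : EuclideanSpace ℂ (Fin n × Fin m)),
      ⟪ev' F a, x⟫_ℂ = ⟪F, kfun' a x⟫_ℂ)
    (hker' : ∀ (b : Λ) (x : EuclideanSpace ℂ (Fin n × Fin m)) (a : Λ),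
      ev' (kfun' b x) a = Matrix.toEuclideanLin ((K₁ a b) ⊗ₖ (K₂ a b)) x)
    (htot' : (Submodule.span ℂ
      {h : H' | ∃ (b : Λ) (x : EuclideanSpace ℂ (Fin n × Fin m)),
        h = kfun' b x}).topologicalClosure = ⊤) :
    ∃ π : H →L[ℂ] H',
      (∀ y : H', ‖ContinuousLinearMap.adjoint π y‖ = ‖y‖) ∧
      (∀ (F : H) (a : Λ), ev' (π F) a = ev F (a, a)) ∧
      (LinearMap.ker (π : H →ₗ[ℂ] H')
        = ⨅ a : Λ, LinearMap.ker
            ((LinearMap.proj (R := ℂ)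
              (φ := fun _ : Λ × Λ => EuclideanSpace ℂ (Fin n × Fin m))
              ((a, a) : Λ × Λ)).comp ev)) ∧
      (∀ (μ : Λ) (x₁ : Fin n → ℂ) (x₂ : Fin m → ℂ),
        ContinuousLinearMap.adjoint π
            (kfun' μ ((WithLp.toLp 2 (fun p : Fin n × Fin m => x₁ p.1 * x₂ p.2) : EuclideanSpace ℂ (Fin n × Fin m))))
          = kfun (μ, μ) ((WithLp.toLp 2 (fun p : Fin n × Fin m => x₁ p.1 * x₂ p.2) :
              EuclideanSpace ℂ (Fin n × Fin m)))) := by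
  have hspan' : {h : H' | ∃ (b : Λ) (x : EuclideanSpace ℂ (Fin n × Fin m)), h = kfun' b x} =
      Set.range (Function.uncurry kfun') := by
    ext h
    simp [eq_comm]
  rw [hspan'] at htot'
  obtain ⟨S, hS⟩ := exists_linearIsometry_of_inner_eq (w := fun q => kfun (q.1, q.1) q.2) htot'
    (by
      rintro ⟨a, x⟩ ⟨b, y⟩
      rw [Function.uncurry_apply_pair, Function.uncurry_apply_pair, ← hrep', ← hrep, hker', hker])
  set π := adjoint S.toContinuousLinearMap
  have hdiag : ∀ (F : H) (a : Λ), ev' (π F) a = ev F (a, a) :=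
    eval_adjoint_apply_of_map_kernel hrep hrep' (φ := fun a => (a, a)) fun b x => hS (b, x)
  refine ⟨π, fun y => ?_, hdiag, ?_, fun μ x₁ x₂ => ?_⟩
  · rw [adjoint_adjoint]
    exact S.norm_map y
  · ext F
    simp only [LinearMap.mem_ker, Submodule.mem_iInf, LinearMap.comp_apply,
      LinearMap.proj_apply, ContinuousLinearMap.coe_coe, ← hdiag]
    exact ⟨fun h a => by rw [h, map_zero, Pi.zero_apply],
      eq_zero_of_forall_eval_eq_zero_of_reproducing hrep' htot'⟩
  · rw [adjoint_adjoint]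
    exact hS (μ, _)

/-- Restriction to the diagonal defines a coisometry `π` from `H_{K₁} ⊗ H_{K₂}`
(the RKHS `H` on `Λ × Λ` with kernel `K₁ ⊗ K₂`) onto the RKHS `H'` of the pointwise
tensor product kernel `(K₁ ∗ K₂)(a, b) = K₁(a,b) ⊗ K₂(a,b)`, with
`ker π = N = {F : F(a,a) = 0 ∀ a}` and
`π*((K₁∗K₂)(·,μ)(x₁ ⊗ x₂)) = K₁(·,μ)x₁ ⊗ K₂(·,μ)x₂`. -/
theorem diagonal_restriction_coisometry {Λ : Type*} {n m : ℕ} {H H' : Type*}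
    [NormedAddCommGroup H] [InnerProductSpace ℂ H] [CompleteSpace H]
    [NormedAddCommGroup H'] [InnerProductSpace ℂ H'] [CompleteSpace H']
    (K₁ : Λ → Λ → Matrix (Fin n) (Fin n) ℂ)
    (K₂ : Λ → Λ → Matrix (Fin m) (Fin m) ℂ)
    -- `H` : the RKHS on `Λ × Λ` with kernel `K₁ ⊗ K₂`
    (ev : H →ₗ[ℂ] ((Λ × Λ) → EuclideanSpace ℂ (Fin n × Fin m)))
    (kfun : (Λ × Λ) → EuclideanSpace ℂ (Fin n × Fin m) → H)
    (hrep : ∀ (F : H) (p : Λ × Λ) (x : EuclideanSpace ℂ (Fin n × Fin m)),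
      ⟪ev F p, x⟫_ℂ = ⟪F, kfun p x⟫_ℂ)
    (hker : ∀ (q : Λ × Λ) (x : EuclideanSpace ℂ (Fin n × Fin m)) (p : Λ × Λ),
      ev (kfun q x) p = Matrix.toEuclideanLin ((K₁ p.1 q.1) ⊗ₖ (K₂ p.2 q.2)) x)
    (htot : (Submodule.span ℂ
      {h : H | ∃ (q : Λ × Λ) (x : EuclideanSpace ℂ (Fin n × Fin m)),
        h = kfun q x}).topologicalClosure = ⊤)
    -- `H'` : the RKHS on `Λ` with kernel `K₁ ∗ K₂`
    (ev' : H' →ₗ[ℂ] (Λ → EuclideanSpace ℂ (Fin n × Fin m)))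
    (kfun' : Λ → EuclideanSpace ℂ (Fin n × Fin m) → H')
    (hrep' : ∀ (F : H') (a : Λ) (x : EuclideanSpace ℂ (Fin n × Fin m)),
      ⟪ev' F a, x⟫_ℂ = ⟪F, kfun' a x⟫_ℂ)
    (hker' : ∀ (b : Λ) (x : EuclideanSpace ℂ (Fin n × Fin m)) (a : Λ),
      ev' (kfun' b x) a = Matrix.toEuclideanLin ((K₁ a b) ⊗ₖ (K₂ a b)) x)
    (htot' : (Submodule.span ℂ
      {h : H' | ∃ (b : Λ) (x : EuclideanSpace ℂ (Fin n × Fin m)),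
        h = kfun' b x}).topologicalClosure = ⊤) :
    ∃ π : H →L[ℂ] H',
      (∀ y : H', ‖ContinuousLinearMap.adjoint π y‖ = ‖y‖) ∧
      (∀ (F : H) (a : Λ), ev' (π F) a = ev F (a, a)) ∧
      (LinearMap.ker (π : H →ₗ[ℂ] H')
        = ⨅ a : Λ, LinearMap.ker
            ((LinearMap.proj (R := ℂ)
              (φ := fun _ : Λ × Λ => EuclideanSpace ℂ (Fin n × Fin m))
              ((a, a) : Λ × Λ)).comp ev)) ∧
      (∀ (μ : Λ) (x₁ : Fin n → ℂ) (x₂ : Fin m → ℂ),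
        ContinuousLinearMap.adjoint π
            (kfun' μ ((WithLp.toLp 2 (fun p : Fin n × Fin m => x₁ p.1 * x₂ p.2) : EuclideanSpace ℂ (Fin n × Fin m))))
          = kfun (μ, μ) ((WithLp.toLp 2 (fun p : Fin n × Fin m => x₁ p.1 * x₂ p.2) :
              EuclideanSpace ℂ (Fin n × Fin m)))) :=
  diagonal_restriction_coisometry_general K₁ K₂ ev kfun hrep hker ev' kfun' hrep' hker' htot'
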